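/- arXiv:2106.14354 — 5 statements merged into one kernel-verified Lean document; each statement's English description precedes it below -/
import Mathlib

section
/- Let G be a simple graph on a finite vertex type V, let C be a type of colors, and let f : V → C be a proper coloring of G. Let c₁, c₂ : C be distinct colors, let v be a vertex, and let A, B be finsets of vertices with |A| = x and |B| = x' such that every vertex of A is adjacent to every vertex of B, and v is adjacent to every vertex of B. If f v = c₂, then either the set of vertices u with f u ∉ {c₁, c₂} has cardinality at least x', or the set of vertices u with f u ≠ c₁ has cardinality at least x. -/
theorem stmt_1 {V C : Type*} [Fintype V] [DecidableEq C]
    (G : SimpleGraph V) (f : V → C)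
    (hf : ∀ u w : V, G.Adj u w → f u ≠ f w)
    (c₁ c₂ : C) (hc : c₁ ≠ c₂) (v : V)
    (x x' : ℕ) (A B : Finset V)
    (hA : A.card = x) (hB : B.card = x')
    (hAB : ∀ a ∈ A, ∀ b ∈ B, G.Adj a b)
    (hvB : ∀ b ∈ B, G.Adj v b)
    (hv : f v = c₂) :
    x' ≤ (Finset.univ.filter (fun u : V => f u ∉ ({c₁, c₂} : Finset C))).card ∨
      x ≤ (Finset.univ.filter (fun u : V => f u ≠ c₁)).card := by
  by_cases h : ∀ b ∈ B, f b ∉ ({c₁, c₂} : Finset C)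
  · left
    rw [← hB]
    exact Finset.card_le_card (fun b hb => Finset.mem_filter.2 ⟨Finset.mem_univ _, h b hb⟩)
  · right
    push_neg at h
    obtain ⟨b, hbB, hfb⟩ := h
    have hbc₁ : f b = c₁ := by
      rcases Finset.mem_insert.1 hfb with h1 | h2
      · exact h1
      · exact absurd (Finset.mem_singleton.1 h2) (fun h2 => hf v b (hvB b hbB) (hv.trans h2.symm))
    rw [← hA]
    refine Finset.card_le_card (fun a ha => Finset.mem_filter.2 ⟨Finset.mem_univ _, ?_⟩)
    intro hfa
    exact hf a b (hAB a ha b hbB) (hfa.trans hbc₁.symm)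
end

section
/- Let G be a simple graph on a finite vertex type V, let C be a type of colors, and let f : V → C be a proper coloring of G. Let c₁, c₂, c₃ : C be pairwise distinct colors, let v be a vertex, and let A, A*, B, D be finsets of vertices with |A| = x, |A*| = x, |B| = x', |D| = x'' such that: every vertex of A is adjacent to every vertex of B; every vertex of B is adjacent to every vertex of D; every vertex of A* is adjacent to every vertex of D; and v is adjacent to every vertex of D. If f v = c₃, then at least one of the following holds: the set of vertices u with f u ∉ {c₁, c₂, c₃} has cardinality at least x''; or the set of vertices u with f u ∉ {c₁, c₂} has cardinality at least x'; or the set of vertices u with f u ≠ c₁ has cardinality at least x. -/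
theorem stmt_2 {V C : Type*} [Fintype V] [DecidableEq C]
    (G : SimpleGraph V) (f : V → C)
    (hf : ∀ u w : V, G.Adj u w → f u ≠ f w)
    (c₁ c₂ c₃ : C) (hc12 : c₁ ≠ c₂) (hc13 : c₁ ≠ c₃) (hc23 : c₂ ≠ c₃)
    (v : V) (x x' x'' : ℕ) (A Astar B D : Finset V)
    (hA : A.card = x) (hAstar : Astar.card = x)
    (hB : B.card = x') (hD : D.card = x'')
    (hAB : ∀ a ∈ A, ∀ b ∈ B, G.Adj a b)
    (hBD : ∀ b ∈ B, ∀ d ∈ D, G.Adj b d)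
    (hAstarD : ∀ a ∈ Astar, ∀ d ∈ D, G.Adj a d)
    (hvD : ∀ d ∈ D, G.Adj v d)
    (hv : f v = c₃) :
    x'' ≤ (Finset.univ.filter (fun u : V => f u ∉ ({c₁, c₂, c₃} : Finset C))).card ∨
      x' ≤ (Finset.univ.filter (fun u : V => f u ∉ ({c₁, c₂} : Finset C))).card ∨
      x ≤ (Finset.univ.filter (fun u : V => f u ≠ c₁)).card := by
  by_cases h1 : ∃ d ∈ D, f d = c₁
  · obtain ⟨d, hd, hfd⟩ := h1
    right; right
    rw [← hAstar]
    apply Finset.card_le_card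
    intro a ha
    simp only [Finset.mem_filter, Finset.mem_univ, true_and]
    intro he
    exact hf a d (hAstarD a ha d hd) (he.trans hfd.symm)
  · by_cases h2 : ∃ d ∈ D, f d = c₂
    · obtain ⟨d, hd, hfd⟩ := h2
      by_cases h3 : ∃ b ∈ B, f b = c₁
      · obtain ⟨b, hb, hfb⟩ := h3
        right; right
        rw [← hA]
        apply Finset.card_le_card
        intro a ha
        simp only [Finset.mem_filter, Finset.mem_univ, true_and]
        intro he
        exact hf a b (hAB a ha b hb) (he.trans hfb.symm)
      · right; left
        rw [← hB]
        apply Finset.card_le_card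
        intro b hb
        simp only [Finset.mem_filter, Finset.mem_univ, true_and, Finset.mem_insert,
          Finset.mem_singleton]
        push_neg
        refine ⟨fun he => h3 ⟨b, hb, he⟩, fun he => hf b d (hBD b hb d hd) (he.trans hfd.symm)⟩
    · left
      rw [← hD]
      apply Finset.card_le_card
      intro d hd
      simp only [Finset.mem_filter, Finset.mem_univ, true_and, Finset.mem_insert,
        Finset.mem_singleton]
      push_neg
      refine ⟨fun he => h1 ⟨d, hd, he⟩, fun he => h2 ⟨d, hd, he⟩,
        fun he => hf v d (hvD d hd) (hv.trans he.symm)⟩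
end

section
/- The function g : ℝ → ℝ defined by g(a) = (1 - exp(-a)) / (1 - exp(exp(-a) - 1)) is monotone nondecreasing on the open interval (0, ∞). -/
/-!
Write `g(a) = h(1 - e^{-a})` with `h(t) = t / (1 - e^{-t})`. The inner map is increasing and sends
`(0, ∞)` into itself, and `1 / h(t)` is the slope of the secant of the concave function
`u ↦ 1 - e^{-u}` between `0` and `t`, which decreases in `t`; so `h` increases on `(0, ∞)`.
-/

open Real Set

lemma convexOn_exp_neg : ConvexOn ℝ univ (fun t : ℝ => exp (-t)) :=
  convexOn_exp.comp_linearMap (-LinearMap.id)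

lemma one_sub_exp_neg_pos {t : ℝ} (ht : 0 < t) : 0 < 1 - exp (-t) := by
  simpa using exp_lt_one_iff.mpr (neg_neg_of_pos ht)

lemma antitoneOn_one_sub_exp_neg_div : AntitoneOn (fun t : ℝ => (1 - exp (-t)) / t) (Ioi 0) := by
  intro x hx y hy hxy
  have := convexOn_exp_neg.secant_mono (mem_univ 0) (mem_univ x) (mem_univ y)
    (ne_of_gt hx) (ne_of_gt hy) hxy
  simp only [neg_zero, exp_zero, sub_zero] at this
  rw [← neg_sub 1 (exp (-x)), ← neg_sub 1 (exp (-y)), neg_div, neg_div] at this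
  exact neg_le_neg_iff.mp this

lemma monotoneOn_div_one_sub_exp_neg : MonotoneOn (fun t : ℝ => t / (1 - exp (-t))) (Ioi 0) := by
  intro x hx y hy hxy
  simpa only [inv_div] using inv_anti₀ (div_pos (one_sub_exp_neg_pos hy) hy)
    (antitoneOn_one_sub_exp_neg_div hx hy hxy)

lemma monotone_one_sub_exp_neg : Monotone (fun a : ℝ => 1 - exp (-a)) :=
  fun _ _ h => sub_le_sub_left (exp_le_exp.mpr (neg_le_neg h)) 1

theorem stmt_4 :
    MonotoneOn
      (fun a : ℝ => (1 - Real.exp (-a)) / (1 - Real.exp (Real.exp (-a) - 1)))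
      (Set.Ioi (0 : ℝ)) := by
  have h : MonotoneOn ((fun t : ℝ => t / (1 - exp (-t))) ∘ fun a => 1 - exp (-a)) (Ioi 0) :=
    monotoneOn_div_one_sub_exp_neg.comp (monotone_one_sub_exp_neg.monotoneOn _)
      fun _ => one_sub_exp_neg_pos
  simpa only [Function.comp_def, neg_sub] using h
end

section
/- For every real number a > 0, (1 - exp(-a)) / (1 - exp(exp(-a) - 1)) < 1.6. -/
theorem stmt_5 (a : ℝ) (ha : 0 < a) :
    (1 - Real.exp (-a)) / (1 - Real.exp (Real.exp (-a) - 1)) < 1.6 := by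
  set x := Real.exp (-a) with hxdef
  have hx0 : 0 < x := Real.exp_pos _
  have hx1 : x < 1 := by
    rw [hxdef]
    calc Real.exp (-a) < Real.exp 0 := Real.exp_lt_exp.mpr (by linarith)
    _ = 1 := Real.exp_zero
  have hy0 : 0 < Real.exp (x - 1) := Real.exp_pos _
  have hd : Real.exp (x - 1) < 1 := by
    calc Real.exp (x-1) < Real.exp 0 := Real.exp_lt_exp.mpr (by linarith)
    _ = 1 := Real.exp_zero
  have hmul : Real.exp (x - 1) * Real.exp (1 - x) = 1 := by
    rw [← Real.exp_add]; ring_nf; exact Real.exp_zero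
  rw [div_lt_iff₀ (by linarith)]
  -- goal: 1 - x < 1.6 * (1 - exp (x-1))
  rcases le_or_gt (0.4 : ℝ) x with hc | hc
  · -- large x: use 2 - x < exp (1 - x)
    have h1 : (1 - x) + 1 < Real.exp (1 - x) := Real.add_one_lt_exp (by linarith)
    have h2 : Real.exp (x - 1) * (2 - x) < 1 := by
      calc Real.exp (x-1) * (2 - x) < Real.exp (x-1) * Real.exp (1-x) := by
            apply mul_lt_mul_of_pos_left (by linarith) hy0
      _ = 1 := hmul
    nlinarith [mul_nonneg (mul_nonneg hy0.le (sub_nonneg.mpr hc)) (sub_nonneg.mpr hx1.le),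
      mul_pos hy0 hx0]
  · -- small x: exp(1-x) = e * exp(-x) > e * (1-x)
    have hE : (2.7182818283 : ℝ) < Real.exp 1 := Real.exp_one_gt_d9
    have h3 : (-x) + 1 < Real.exp (-x) := Real.add_one_lt_exp (by linarith)
    have h4 : Real.exp (1 - x) = Real.exp 1 * Real.exp (-x) := by
      rw [← Real.exp_add]; ring_nf
    have h5 : Real.exp 1 * (1 - x) < Real.exp (1 - x) := by
      rw [h4]
      exact mul_lt_mul_of_pos_left (by linarith) (Real.exp_pos 1)
    have h6 : Real.exp (x - 1) * (Real.exp 1 * (1 - x)) < 1 := by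
      calc Real.exp (x-1) * (Real.exp 1 * (1-x)) < Real.exp (x-1) * Real.exp (1-x) :=
            mul_lt_mul_of_pos_left h5 hy0
      _ = 1 := hmul
    -- need: 1.6 * exp(x-1) < x + 0.6, knowing exp(x-1) * E * (1-x) < 1, E > 2.718
    have hf : (1 - x) * (x + 0.6) ≥ 0.6 := by nlinarith
    nlinarith [mul_pos hy0 (Real.exp_pos 1), mul_pos hy0 hx0,
      mul_lt_mul_of_pos_right h6 (show (0:ℝ) < x + 0.6 by linarith),
      mul_le_mul_of_nonneg_left hf (mul_nonneg hy0.le (Real.exp_pos 1).le),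
      mul_pos (mul_pos hy0 (Real.exp_pos 1)) (show (0:ℝ) < 1 - x by linarith)]
end

section
/- For every real number a > 0, 1 - 2·exp(exp(-a) - 1) + exp(exp(-a) - 1 - a) ≥ 0. -/
theorem stmt_7 (a : ℝ) (ha : 0 < a) :
    0 ≤ 1 - 2 * Real.exp (Real.exp (-a) - 1) + Real.exp (Real.exp (-a) - 1 - a) := by
  set t := Real.exp (-a) with ht
  have h1 : Real.exp (t - 1 - a) = Real.exp (t - 1) * t := by
    rw [show t - 1 - a = (t - 1) + (-a) by ring, Real.exp_add, ht]
  have key : (2 - t) * Real.exp (t - 1) ≤ 1 := by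
    have h2 : 2 - t ≤ Real.exp (1 - t) := by
      have := Real.add_one_le_exp (1 - t); linarith
    calc (2 - t) * Real.exp (t - 1) ≤ Real.exp (1 - t) * Real.exp (t - 1) :=
          mul_le_mul_of_nonneg_right h2 (Real.exp_pos _).le
      _ = 1 := by rw [← Real.exp_add]; norm_num
  rw [h1]
  nlinarith [key]
end
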